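/- Let f : X → Y be a surjective quandle homomorphism and M ⊆ X a subquandle. Then f(c_X(M)) = c_Y(f(M)): the image under f of the saturation of M equals the saturation of the image f(M). -/

import Mathlib

open Quandles

/-- The paper's (right-action) quandle operation `x ◃ y`, i.e. Mathlib's `y ◃ x`.
With this convention `x ▷ x = x`, `(x ▷ y) ▷⁻¹ y = x = (x ▷⁻¹ y) ▷ y`, and
both `▷` and `▷⁻¹` are right self-distributive. -/
def rAct {Q : Type*} [Quandle Q] (x y : Q) : Q := y ◃ x

/-- The paper's (right-action) inverse quandle operation `x ◃⁻¹ y`, i.e. Mathlib's `y ◃⁻¹ x`. -/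
def rInvAct {Q : Type*} [Quandle Q] (x y : Q) : Q := y ◃⁻¹ x

local infixl:65 " ▷ " => rAct
local infixl:65 " ▷⁻¹ " => rInvAct

/-- The orbit relation `∼` on a quandle: the equivalence relation generated by the
relation `{(a, b) | ∃ z, a ▷ z = b}`; `x ∼ y` iff `x` and `y` lie in the same
connected component (orbit under the inner automorphism group). -/
def orbitRel (Q : Type*) [Quandle Q] : Q → Q → Prop :=
  Relation.EqvGen (fun a b => ∃ z : Q, a ▷ z = b)

/-- A subset of a quandle is a subquandle if it is closed under both operations. -/
def IsSubquandle {Q : Type*} [Quandle Q] (S : Set Q) : Prop :=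
  ∀ a ∈ S, ∀ b ∈ S, a ▷ b ∈ S ∧ a ▷⁻¹ b ∈ S

/-- The saturation (pullback = regular closure) of a subset `M` of a quandle:
the union of the connected components meeting `M`. -/
def saturation {Q : Type*} [Quandle Q] (M : Set Q) : Set Q :=
  {x | ∃ a ∈ M, orbitRel Q x a}

namespace Relation.EqvGen

variable {α β : Type*} {r : α → α → Prop}

theorem map {s : β → β → Prop} (f : α → β) (h : ∀ a b, r a b → s (f a) (f b)) {a b : α}
    (hab : EqvGen r a b) : EqvGen s (f a) (f b) := by
  induction hab with
  | rel a b hab => exact .rel _ _ (h a b hab)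
  | refl a => exact .refl _
  | symm a b _ ih => exact .symm _ _ ih
  | trans a b c _ _ ihab ihbc => exact .trans _ _ _ ihab ihbc

theorem iff_of_forall_iff {p : α → Prop} (h : ∀ a b, r a b → (p a ↔ p b)) {a b : α}
    (hab : EqvGen r a b) : p a ↔ p b :=
  have hiff : Equivalence fun a b => p a ↔ p b := ⟨fun _ => Iff.rfl, Iff.symm, Iff.trans⟩
  hiff.eqvGen_iff.1 (mono h _ _ hab)

end Relation.EqvGen

theorem ShelfHom.map_invAct {R₁ R₂ : Type*} [Rack R₁] [Rack R₂] (f : R₁ →◃ R₂) (x y : R₁) :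
    f (x ◃⁻¹ y) = f x ◃⁻¹ f y := by
  rw [← Rack.left_cancel (f x), ← f.map_act, Rack.right_inv, Rack.right_inv]

def componentOf {Q : Type*} [Quandle Q] (a : Q) : Set Q :=
  {x | orbitRel Q x a}

theorem saturation_eq_biUnion_componentOf {Q : Type*} [Quandle Q] (M : Set Q) :
    saturation M = ⋃ a ∈ M, componentOf a := by
  ext x
  simp [saturation, componentOf]

section

variable {X Y : Type*} [Quandle X] [Quandle Y] (f : X →◃ Y)

theorem orbitRel.map {u v : X} (h : orbitRel X u v) : orbitRel Y (f u) (f v) :=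
  Relation.EqvGen.map f (fun _ _ ⟨z, hz⟩ => ⟨f z, hz ▸ (f.map_act).symm⟩) h

/-- A step `u ▷ z = v` lifts along `f` from either end: act on a lift of `u` with a preimage `w`
of `z`, or on a lift of `v` inversely with `w`. -/
theorem mem_image_componentOf_iff_of_rAct_eq (hf : Function.Surjective f) (a : X)
    {u v z : Y} (huv : u ▷ z = v) : u ∈ f '' componentOf a ↔ v ∈ f '' componentOf a := by
  obtain ⟨w, rfl⟩ := hf z
  constructor
  · rintro ⟨x, hx, rfl⟩
    exact ⟨x ▷ w, .trans _ _ _ (.symm _ _ (.rel _ _ ⟨w, rfl⟩)) hx, huv ▸ f.map_act⟩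
  · rintro ⟨x, hx, rfl⟩
    refine ⟨x ▷⁻¹ w, .trans _ _ _ (.rel _ _ ⟨w, Rack.right_inv w x⟩) hx, ?_⟩
    rw [rInvAct, f.map_invAct, ← huv, rAct, Rack.left_inv]

theorem image_componentOf (hf : Function.Surjective f) (a : X) :
    f '' componentOf a = componentOf (f a) := by
  ext y
  refine ⟨fun ⟨x, hx, hxy⟩ => hxy ▸ orbitRel.map f hx, fun hy => ?_⟩
  have hfa : f a ∈ f '' componentOf a := ⟨a, Relation.EqvGen.refl a, rfl⟩
  exact (Relation.EqvGen.iff_of_forall_iff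
    (fun _ _ ⟨_, huv⟩ => mem_image_componentOf_iff_of_rAct_eq f hf a huv) hy).2 hfa

end

theorem image_saturation_general {X Y : Type*} [Quandle X] [Quandle Y]
    (f : X →◃ Y) (hf : Function.Surjective f)
    (M : Set X) :
    f '' saturation M = saturation (f '' M) := by
  simp only [saturation_eq_biUnion_componentOf, Set.image_iUnion₂, Set.biUnion_image,
    image_componentOf f hf]

/-- For a surjective quandle homomorphism `f : X → Y` and a subquandle `M ⊆ X`,
the image of the saturation of `M` is the saturation of the image:
`f(c_X(M)) = c_Y(f(M))`. -/
theorem image_saturation {X Y : Type*} [Quandle X] [Quandle Y]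
    (f : X →◃ Y) (hf : Function.Surjective f)
    (M : Set X) (hM : IsSubquandle M) :
    f '' saturation M = saturation (f '' M) :=
  image_saturation_general f hf M
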